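/- New trigonometric form of a quaternion: let Q = a + b·i + c·j + d·k be a quaternion such that (a + bi)² + (c + di)² ≠ 0 as a complex number. Then there exist complex numbers ρ and α with ρ² = (a+bi)² + (c+di)² such that Q = (ρ·cos α) + (ρ·sin α)·j, i.e., Q = ρ·Cjs(α), where a complex number x + y·i is identified with the quaternion x + y·i + 0·j + 0·k. -/

import Mathlib

open scoped Quaternion
open Complex

/-- The quaternion imaginary unit `j`. -/
def qj : ℍ[ℝ] := ⟨0, 0, 1, 0⟩

/-- The identification of a complex number `x + y·i` with the quaternion
`x + y·i + 0·j + 0·k`. -/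
def cq (z : ℂ) : ℍ[ℝ] := ⟨z.re, z.im, 0, 0⟩

/-! Write `u = x + y·i` as `e^{iα}`; since `(x + y·i)(x - y·i) = x² + y² = 1`, also
`e^{-iα} = x - y·i`, and adding and subtracting these gives `cos α = x`, `sin α = y`.
Dividing `(a + b·i, c + d·i)` by a square root `ρ` of `(a + b·i)² + (c + d·i)²` reduces the
theorem to this. -/

theorem Complex.exists_cos_sin_eq_of_sq_add_sq_eq_one {x y : ℂ} (h : x ^ 2 + y ^ 2 = 1) :
    ∃ α : ℂ, cos α = x ∧ sin α = y := by
  have hconj : (x + y * I) * (x - y * I) = 1 := by linear_combination h - y ^ 2 * I_sq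
  obtain ⟨α, hα⟩ : ∃ α : ℂ, exp (α * I) = x + y * I := by
    refine ⟨-log (x + y * I) * I, ?_⟩
    rw [mul_assoc, I_mul_I, mul_neg_one, neg_neg, exp_log (left_ne_zero_of_mul_eq_one hconj)]
  have hplus : cos α + sin α * I = x + y * I := by rw [← exp_mul_I, hα]
  have hminus : cos α - sin α * I = x - y * I := by
    rw [← inv_eq_of_mul_eq_one_right hconj, ← hα, ← exp_neg, ← neg_mul, exp_mul_I, cos_neg,
      sin_neg, neg_mul, ← sub_eq_add_neg]
  exact ⟨α, by linear_combination (hplus + hminus) / 2,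
    by linear_combination (hplus - hminus) * (-I) / 2 + (sin α - y) * I_sq⟩

theorem Complex.exists_mul_cos_mul_sin_eq {z₁ z₂ ρ : ℂ} (hρ : ρ ^ 2 = z₁ ^ 2 + z₂ ^ 2)
    (hρ₀ : ρ ≠ 0) : ∃ α : ℂ, ρ * cos α = z₁ ∧ ρ * sin α = z₂ := by
  have hunit : (z₁ / ρ) ^ 2 + (z₂ / ρ) ^ 2 = 1 := by field_simp; exact hρ.symm
  obtain ⟨α, hcos, hsin⟩ := exists_cos_sin_eq_of_sq_add_sq_eq_one hunit
  exact ⟨α, by rw [hcos, mul_div_cancel₀ _ hρ₀], by rw [hsin, mul_div_cancel₀ _ hρ₀]⟩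

theorem cq_add_cq_mul_qj (u v : ℂ) : cq u + cq v * qj = ⟨u.re, u.im, v.re, v.im⟩ := by
  ext <;> simp [Quaternion.re_mul, Quaternion.imI_mul, Quaternion.imJ_mul, Quaternion.imK_mul] <;>
    simp [cq, qj]

/-- New trigonometric form: if `(a + bi)² + (c + di)² ≠ 0`, then the quaternion
`a + b·i + c·j + d·k` equals `ρ·Cjs(α) = (ρ·cos α) + (ρ·sin α)·j` for some complex
`ρ, α` with `ρ² = (a+bi)² + (c+di)²`. -/
theorem quaternion_new_trig_form (a b c d : ℝ)
    (h : (a + b * I : ℂ) ^ 2 + (c + d * I : ℂ) ^ 2 ≠ 0) :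
    ∃ ρ α : ℂ, ρ ^ 2 = (a + b * I : ℂ) ^ 2 + (c + d * I : ℂ) ^ 2 ∧
      (⟨a, b, c, d⟩ : ℍ[ℝ]) = cq (ρ * Complex.cos α) + cq (ρ * Complex.sin α) * qj := by
  obtain ⟨ρ, hρ⟩ := IsAlgClosed.exists_pow_nat_eq ((a + b * I : ℂ) ^ 2 + (c + d * I) ^ 2) two_pos
  have hρ₀ : ρ ≠ 0 := by rintro rfl; exact h (by rw [← hρ, zero_pow two_ne_zero])
  obtain ⟨α, hcos, hsin⟩ := exists_mul_cos_mul_sin_eq hρ hρ₀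
  refine ⟨ρ, α, hρ, ?_⟩
  rw [cq_add_cq_mul_qj, hcos, hsin]
  simp
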